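/- Let p be a prime and d_1,...,d_k integers that are pairwise distinct modulo p. Let J ⊆ {1,...,k} with j = card J, and set q_i = p for i ∈ J and q_i = 1 for i ∉ J. Then A(q_1,...,q_k) = (-1)^{j-1}(j-1), where A(q_1,...,q_k) = ∑ e(∑_{i=1}^k d_i a_i/q_i) with the sum over tuples (a_1,...,a_k), 1 ≤ a_i ≤ q_i, gcd(a_i,q_i)=1, ∑ a_i/q_i ∈ ℤ. -/

import Mathlib

/-!
Detecting the condition `∑ aᵢ/qᵢ ∈ ℤ` by the orthogonality of additive characters mod `p` factors
the sum as `A = p⁻¹ ∑ₜ ∏ᵢ c_{qᵢ}(dᵢ + t)` (`t` mod `p`), where `c_q` is the Ramanujan sum;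
`c_1 = 1` and `c_p(n) = p·[p ∣ n] - 1`. As the `dᵢ` are distinct mod `p`, for each `t` at most one
of the `j` factors is `p - 1` and the others are `-1`, and each `i ∈ J` is hit by exactly one `t`;
hence `p·A = p·(-1)^j + j·p·(-1)^(j-1) = p·(j - 1)·(-1)^(j-1)`.
-/

open Finset

/-- The Hardy–Littlewood exponential sum `A(q₁,…,q_k)` attached to the tuple `d`. -/
noncomputable def HLA (k : ℕ) (d : Fin k → ℤ) (q : Fin k → ℕ) : ℂ :=
  ∑ a ∈ (Fintype.piFinset fun i => Finset.Icc 1 (q i)).filter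
      (fun a => (∀ i, Nat.gcd (a i) (q i) = 1) ∧ (∑ i, (a i : ℚ) / (q i : ℚ)).den = 1),
    Complex.exp (2 * Real.pi * Complex.I * ∑ i, (d i : ℂ) * (a i : ℂ) / (q i : ℂ))

open Complex Real

theorem ZMod.sum_range_natCast {M : Type*} [AddCommMonoid M] (N : ℕ) [NeZero N]
    (f : ZMod N → M) : ∑ a ∈ range N, f a = ∑ x, f x :=
  sum_nbij' Nat.cast ZMod.val (fun _ _ => mem_univ _) (fun x _ => mem_range.2 (ZMod.val_lt x))
    (fun _ ha => ZMod.val_cast_of_lt (mem_range.1 ha)) (fun x _ => ZMod.natCast_zmod_val x)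
    (fun _ _ => rfl)

theorem sum_range_exp_eq_ite (N : ℕ) [NeZero N] (m : ℤ) :
    ∑ t ∈ range N, exp (2 * π * I * m * t / N) = if (N : ℤ) ∣ m then (N : ℂ) else 0 := by
  have h := AddChar.sum_mulShift (m : ZMod N) (ZMod.isPrimitive_stdAddChar N)
  rw [← ZMod.sum_range_natCast] at h
  simp only [ZMod.intCast_zmod_eq_zero_iff_dvd, ZMod.card, Nat.cast_ite, Nat.cast_zero] at h
  rw [← h]
  refine sum_congr rfl fun t _ => ?_
  rw [show (t : ZMod N) * m = ((t * m : ℤ) : ZMod N) by push_cast; rfl, ZMod.stdAddChar_coe]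
  push_cast
  ring_nf

noncomputable def ramanujanSum (q : ℕ) (n : ℤ) : ℂ :=
  ∑ a ∈ (Icc 1 q).filter (fun a => Nat.gcd a q = 1), exp (2 * π * I * n * a / q)

theorem ramanujanSum_one (n : ℤ) : ramanujanSum 1 n = 1 := by
  simp only [ramanujanSum]
  simpa [mul_comm] using Complex.exp_int_mul_two_pi_mul_I n

theorem ramanujanSum_prime {p : ℕ} (hp : p.Prime) (n : ℤ) :
    ramanujanSum p n = if (p : ℤ) ∣ n then (p : ℂ) - 1 else -1 := by
  have : NeZero p := ⟨hp.ne_zero⟩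
  have hunits : (Icc 1 p).filter (fun a => Nat.gcd a p = 1) = (range p).erase 0 := by
    ext a
    simp only [mem_filter, mem_Icc, mem_erase, mem_range, ← Nat.coprime_iff_gcd_eq_one,
      Nat.coprime_comm, hp.coprime_iff_not_dvd]
    constructor
    · rintro ⟨⟨ha1, hap⟩, hndvd⟩
      exact ⟨by omega, lt_of_le_of_ne hap fun h => hndvd (h ▸ dvd_rfl)⟩
    · rintro ⟨ha0, hap⟩
      exact ⟨⟨by omega, hap.le⟩, fun h => absurd (Nat.le_of_dvd (by omega) h) (by omega)⟩
  rw [ramanujanSum, hunits, sum_erase_eq_sub (mem_range.2 (NeZero.pos p)),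
    sum_range_exp_eq_ite]
  split_ifs <;> simp

theorem sum_div_eq_div_of_dvd {ι K : Type*} [Fintype ι] [Field K] [CharZero K] {N : ℕ}
    (hN : N ≠ 0) (q a : ι → ℕ) (hq : ∀ i, q i ∣ N) :
    ∑ i, (a i : K) / q i = ((∑ i, a i * (N / q i) : ℕ) : K) / N := by
  have hq0 : ∀ i, (q i : K) ≠ 0 := fun i =>
    Nat.cast_ne_zero.2 (ne_zero_of_dvd_ne_zero hN (hq i))
  rw [Nat.cast_sum, sum_div]
  refine sum_congr rfl fun i _ => ?_
  rw [Nat.cast_mul, Nat.cast_div (hq i) (hq0 i)]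
  field_simp

theorem HLA_eq_sum_range_prod_ramanujanSum {k N : ℕ} [NeZero N] (d : Fin k → ℤ)
    (q : Fin k → ℕ) (hq : ∀ i, q i ∣ N) :
    HLA k d q = (N : ℂ)⁻¹ * ∑ t ∈ range N, ∏ i, ramanujanSum (q i) (d i + t) := by
  set s : (Fin k → ℕ) → ℕ := fun a => ∑ i, a i * (N / q i)
  have hden (a : Fin k → ℕ) : (∑ i, (a i : ℚ) / q i).den = 1 ↔ (N : ℤ) ∣ s a := by
    rw [sum_div_eq_div_of_dvd (NeZero.ne N) q a hq,
      Rat.den_div_natCast_eq_one_iff _ _ (NeZero.ne N), Int.natCast_dvd_natCast]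
  have hexp (a : Fin k → ℕ) (t : ℕ) :
      exp (2 * π * I * (s a : ℤ) * t / N) * exp (2 * π * I * ∑ i, (d i : ℂ) * a i / q i) =
        ∏ i, exp (2 * π * I * (d i + t : ℤ) * a i / q i) := by
    have hs : ((s a : ℤ) : ℂ) * t / N = t * ∑ i, (a i : ℂ) / q i := by
      rw [Int.cast_natCast, sum_div_eq_div_of_dvd (NeZero.ne N) q a hq]
      ring
    rw [← Complex.exp_add, ← Complex.exp_sum]
    congr 1
    calc _ = 2 * π * I * (((s a : ℤ) : ℂ) * t / N) + 2 * π * I * ∑ i, (d i : ℂ) * a i / q i := by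
          ring
      _ = _ := by
          rw [hs, mul_sum, mul_sum, mul_sum, ← sum_add_distrib]
          refine sum_congr rfl fun i _ => ?_
          push_cast
          ring
  have hcoprime : (Fintype.piFinset fun i => Icc 1 (q i)).filter
      (fun a => ∀ i, Nat.gcd (a i) (q i) = 1) =
      Fintype.piFinset fun i => (Icc 1 (q i)).filter (fun a => Nat.gcd a (q i) = 1) := by
    ext a
    simp only [mem_filter, Fintype.mem_piFinset, forall_and]
  rw [HLA, ← filter_filter, hcoprime, sum_filter]
  simp_rw [ramanujanSum, prod_univ_sum]
  calc _ = ∑ a ∈ Fintype.piFinset fun i => (Icc 1 (q i)).filter (fun a => Nat.gcd a (q i) = 1),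
        (N : ℂ)⁻¹ * ∑ t ∈ range N, ∏ i, exp (2 * π * I * (d i + t : ℤ) * a i / q i) := by
        refine sum_congr rfl fun a _ => ?_
        simp_rw [hden, ← hexp, ← sum_mul, sum_range_exp_eq_ite]
        split_ifs
        · rw [inv_mul_cancel_left₀ (Nat.cast_ne_zero.2 (NeZero.ne N))]
        · rw [zero_mul, mul_zero]
    _ = _ := by
        rw [← mul_sum, sum_comm]

theorem prod_ite_of_card_filter_le_one {ι R : Type*} [CommRing R] (J : Finset ι)
    (P : ι → Prop) [DecidablePred P] (hP : #(J.filter P) ≤ 1) (u v : R) :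
    ∏ i ∈ J, (if P i then u else v) = v ^ #J + #(J.filter P) * (u - v) * v ^ (#J - 1) := by
  have hcard := card_filter_add_card_filter_not (s := J) (p := P)
  rw [prod_ite, prod_const, prod_const]
  interval_cases h : #(J.filter P)
  · simp_all
  · obtain ⟨n, hn⟩ : ∃ n, #J = n + 1 := ⟨#J - 1, by omega⟩
    rw [hn] at hcard ⊢
    rw [show #(J.filter (¬P ·)) = n by omega]
    simp only [Nat.add_sub_cancel]
    ring

theorem sum_card_filter_add_eq_zero {ι G : Type*} [AddGroup G] [Fintype G] [DecidableEq G]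
    (J : Finset ι) (d : ι → G) : ∑ t : G, #(J.filter (fun i => d i + t = 0)) = #J := by
  simp only [card_filter, add_eq_zero_iff_neg_eq]
  rw [sum_comm]
  simp

theorem sum_prod_ite_add_eq_zero {ι G R : Type*} [AddGroup G] [Fintype G] [DecidableEq G]
    [CommRing R] (J : Finset ι) (d : ι → G) (hd : Set.InjOn d J) (u v : R) :
    ∑ t : G, ∏ i ∈ J, (if d i + t = 0 then u else v) =
      Fintype.card G * v ^ #J + #J * (u - v) * v ^ (#J - 1) := by
  have hle : ∀ t : G, #(J.filter (fun i => d i + t = 0)) ≤ 1 := fun t =>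
    card_le_one.2 fun i hi j hj => hd (mem_filter.1 hi).1 (mem_filter.1 hj).1
      (add_right_cancel ((mem_filter.1 hi).2.trans (mem_filter.1 hj).2.symm))
  simp_rw [prod_ite_of_card_filter_le_one J _ (hle _), sum_add_distrib, ← sum_mul]
  rw [← Nat.cast_sum, sum_card_filter_add_eq_zero, sum_const, card_univ, nsmul_eq_mul]

theorem prod_ramanujanSum_eq_prod_ite {k p : ℕ} (hp : p.Prime) (d : Fin k → ℤ)
    (J : Finset (Fin k)) (q : Fin k → ℕ) (hq : ∀ i, q i = if i ∈ J then p else 1) (t : ℕ) :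
    ∏ i, ramanujanSum (q i) (d i + t) =
      ∏ i ∈ J, (if (d i : ZMod p) + t = 0 then (p : ℂ) - 1 else -1) := by
  calc ∏ i, ramanujanSum (q i) (d i + t)
      = ∏ i, (if i ∈ J then ramanujanSum p (d i + t) else 1) :=
        prod_congr rfl fun i _ => by rw [hq i]; split_ifs <;> simp [ramanujanSum_one]
    _ = _ := by
        rw [prod_ite_mem, univ_inter]
        refine prod_congr rfl fun i _ => ?_
        simp only [ramanujanSum_prime hp, ← ZMod.intCast_zmod_eq_zero_iff_dvd, Int.cast_add,
          Int.cast_natCast]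

/-- Evaluation of `A(q₁,…,q_k)` when the moduli are `p` on a set `J` and `1`
elsewhere, and the `dᵢ` are distinct mod `p`: it equals `(-1)^{j-1}(j-1)`. -/
theorem stmt_5 (k : ℕ) (p : ℕ) (hp : p.Prime) (d : Fin k → ℤ)
    (hd : Function.Injective fun i => ((d i : ZMod p)))
    (J : Finset (Fin k)) (hJ : 1 ≤ J.card)
    (q : Fin k → ℕ) (hq : ∀ i, q i = if i ∈ J then p else 1) :
    HLA k d q = (-1 : ℂ) ^ (J.card - 1) * ((J.card : ℂ) - 1) := by
  have : NeZero p := ⟨hp.ne_zero⟩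
  have hqp (i : Fin k) : q i ∣ p := by
    rw [hq i]
    split_ifs <;> simp
  rw [HLA_eq_sum_range_prod_ramanujanSum d q hqp]
  simp_rw [prod_ramanujanSum_eq_prod_ite hp d J q hq]
  rw [ZMod.sum_range_natCast p
      fun t => ∏ i ∈ J, if (d i : ZMod p) + t = 0 then (p : ℂ) - 1 else -1,
    sum_prod_ite_add_eq_zero J _ hd.injOn, ZMod.card]
  obtain ⟨n, hn⟩ : ∃ n, #J = n + 1 := ⟨#J - 1, by omega⟩
  rw [hn, Nat.add_sub_cancel]
  have hp0 : (p : ℂ) ≠ 0 := Nat.cast_ne_zero.2 hp.ne_zero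
  push_cast
  field_simp
  ring
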